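/- arXiv:2307.00961 — 7 statements merged into one kernel-verified Lean document; each statement's English description precedes it below -/
import Mathlib

section
/- A linear map T: V → L is an embedding tensor on the 3-Hom-Lie algebra (L,[·,·,·],α) with respect to the representation (V;ρ,β) if and only if the graph Gr(T) = {Tu + u | u ∈ V} is a 3-Hom-Leibniz subalgebra of the hemisemidirect product 3-Hom-Leibniz algebra L ⋉_ρ V. -/
/-- A 3-Hom-Lie algebra structure on a vector space `L` over `K`:
a trilinear skew-symmetric bracket and a linear map `α` satisfying
multiplicativity and the Hom-Filippov-Jacobi identity. -/
structure HomLie3 (K L : Type*) [Field K] [AddCommGroup L] [Module K L] where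
  bracket : L → L → L → L
  α : L →ₗ[K] L
  add₁ : ∀ x x' y z, bracket (x + x') y z = bracket x y z + bracket x' y z
  smul₁ : ∀ (c : K) (x y z : L), bracket (c • x) y z = c • bracket x y z
  add₃ : ∀ x y z z', bracket x y (z + z') = bracket x y z + bracket x y z'
  smul₃ : ∀ (c : K) (x y z : L), bracket x y (c • z) = c • bracket x y z
  skew₁₂ : ∀ x y z, bracket x y z = - bracket y x z
  skew₂₃ : ∀ x y z, bracket x y z = - bracket x z y
  mult : ∀ x y z, α (bracket x y z) = bracket (α x) (α y) (α z)
  jacobi : ∀ a b x y z, bracket (α a) (α b) (bracket x y z) =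
    bracket (bracket a b x) (α y) (α z) + bracket (α x) (bracket a b y) (α z)
      + bracket (α x) (α y) (bracket a b z)

variable {K L V : Type*} [Field K] [AddCommGroup L] [Module K L]
  [AddCommGroup V] [Module K V]

/-- `(V; ρ, β)` is a representation of the 3-Hom-Lie algebra `A`. -/
def IsRep (A : HomLie3 K L) (ρ : L → L → V →ₗ[K] V) (β : V →ₗ[K] V) : Prop :=
  (∀ x x' y, ρ (x + x') y = ρ x y + ρ x' y) ∧
  (∀ (c : K) (x y : L), ρ (c • x) y = c • ρ x y) ∧
  (∀ x y, ρ x y = - ρ y x) ∧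
  (∀ x y, (ρ (A.α x) (A.α y)) ∘ₗ β = β ∘ₗ ρ x y) ∧
  (∀ x y a b, ρ (A.α x) (A.α y) ∘ₗ ρ a b - ρ (A.α a) (A.α b) ∘ₗ ρ x y
      = (ρ (A.bracket x y a) (A.α b) - ρ (A.bracket x y b) (A.α a)) ∘ₗ β) ∧
  (∀ x y a b, ρ (A.bracket x y a) (A.α b) ∘ₗ β - ρ (A.α y) (A.α a) ∘ₗ ρ x b
      = ρ (A.α a) (A.α x) ∘ₗ ρ y b + ρ (A.α x) (A.α y) ∘ₗ ρ a b)

/-- `T : V → L` is an embedding tensor on the 3-Hom-Lie algebra `A` with respect to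
the representation `(V; ρ, β)`. -/
def IsEmbeddingTensor (A : HomLie3 K L) (ρ : L → L → V →ₗ[K] V) (β : V →ₗ[K] V)
    (T : V →ₗ[K] L) : Prop :=
  (∀ v, T (β v) = A.α (T v)) ∧
  (∀ u v w, A.bracket (T u) (T v) (T w) = T (ρ (T u) (T v) w))

/-- The adjoint action `ad(x,y) = [x,y,·]` as a linear endomorphism. -/
def adE (A : HomLie3 K L) (x y : L) : L →ₗ[K] L where
  toFun := A.bracket x y
  map_add' := A.add₃ x y
  map_smul' := fun c z => A.smul₃ c x y z

/-- The hemisemidirect product bracket on `L × V`: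
`[x+u, y+v, z+w]_ρ = [x,y,z] + ρ(x,y)(w)`. -/
def brP (A : HomLie3 K L) (ρ : L → L → V →ₗ[K] V) (p q r : L × V) : L × V :=
  (A.bracket p.1 q.1 r.1, ρ p.1 q.1 r.2)

/-- The structure map `α ⊕ β` on `L × V`. -/
def mapP (A : HomLie3 K L) (β : V →ₗ[K] V) (p : L × V) : L × V :=
  (A.α p.1, β p.2)


/-- `T` is an embedding tensor if and only if its graph is a 3-Hom-Leibniz subalgebra
of the hemisemidirect product `L ⋉_ρ V`. -/
theorem isEmbeddingTensor_iff_graph_subalgebra (A : HomLie3 K L)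
    (ρ : L → L → V →ₗ[K] V) (β : V →ₗ[K] V) (hrep : IsRep A ρ β)
    (T : V →ₗ[K] L) :
    IsEmbeddingTensor A ρ β T ↔
      ((∀ u : V, ∃ u' : V, mapP A β (T u, u) = (T u', u')) ∧
       (∀ u v w : V, ∃ s : V, brP A ρ (T u, u) (T v, v) (T w, w) = (T s, s))) := by
  constructor
  · rintro ⟨h1, h2⟩
    refine ⟨fun u => ⟨β u, ?_⟩, fun u v w => ⟨ρ (T u) (T v) w, ?_⟩⟩
    · simp [mapP, h1]
    · simp [brP, h2]
  · rintro ⟨h1, h2⟩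
    constructor
    · intro v
      obtain ⟨u', hu⟩ := h1 v
      simp only [mapP, Prod.mk.injEq] at hu
      rw [hu.2, hu.1]
    · intro u v w
      obtain ⟨s, hs⟩ := h2 u v w
      simp only [brP, Prod.mk.injEq] at hs
      rw [hs.1, hs.2]
end

section
/- Let T: V → L be an embedding tensor on a 3-Hom-Lie algebra (L,[·,·,·],α) with respect to the representation (V;ρ,β). Define [u,v,w]_T = ρ(Tu,Tv)w for u,v,w ∈ V. Then (V, [·,·,·]_T, β) is a 3-Hom-Leibniz algebra. -/
variable {K L V : Type*} [Field K] [AddCommGroup L] [Module K L]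
  [AddCommGroup V] [Module K V]

/-- The bracket `[u,v,w]_T = ρ(Tu,Tv)w` induced by an embedding tensor `T` makes
`(V, [·,·,·]_T, β)` a 3-Hom-Leibniz algebra. -/
theorem embeddingTensor_induces_homLeibniz (A : HomLie3 K L)
    (ρ : L → L → V →ₗ[K] V) (β : V →ₗ[K] V) (hrep : IsRep A ρ β)
    (T : V →ₗ[K] L) (hT : IsEmbeddingTensor A ρ β T) :
    (∀ u v w : V, β (ρ (T u) (T v) w) = ρ (T (β u)) (T (β v)) (β w)) ∧
    (∀ s t u v w : V,
      ρ (T (β s)) (T (β t)) (ρ (T u) (T v) w) =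
        ρ (T (ρ (T s) (T t) u)) (T (β v)) (β w)
          + ρ (T (β u)) (T (ρ (T s) (T t) v)) (β w)
          + ρ (T (β u)) (T (β v)) (ρ (T s) (T t) w)) := by
  obtain ⟨hadd, hsmul, hskew, hcomp, h5, h6⟩ := hrep
  obtain ⟨hTβ, hTb⟩ := hT
  constructor
  · intro u v w
    rw [hTβ, hTβ]
    exact (LinearMap.congr_fun (hcomp (T u) (T v)) w).symm
  · intro s t u v w
    rw [hTβ, hTβ, hTβ, hTβ, ← hTb s t u, ← hTb s t v]
    have h := LinearMap.congr_fun (h5 (T s) (T t) (T u) (T v)) w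
    simp only [LinearMap.sub_apply, LinearMap.comp_apply] at h
    rw [hskew (A.α (T u)) (A.bracket (T s) (T t) (T v))]
    rw [sub_eq_iff_eq_add] at h
    rw [h]
    simp only [LinearMap.neg_apply]
    abel
end

section
/- Let T: V → L be an embedding tensor on a 3-Hom-Lie algebra (L,[·,·,·],α) with respect to (V;ρ,β). Define l_T(u,v,x) = [Tu,Tv,x], m_T(u,x,v) = [Tu,x,Tv] − T(ρ(Tu,x)v), r_T(x,u,v) = [x,Tu,Tv] − T(ρ(x,Tu)v) for u,v ∈ V, x ∈ L. Then (L; l_T, m_T, r_T, α) is a representation of the 3-Hom-Leibniz algebra (V,[·,·,·]_T,β), where [u,v,w]_T = ρ(Tu,Tv)w. -/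
variable {K L V : Type*} [Field K] [AddCommGroup L] [Module K L]
  [AddCommGroup V] [Module K V]

/-- The action `l_T(u,v,x) = [Tu,Tv,x]`. -/
def lT (A : HomLie3 K L) (T : V →ₗ[K] L) (u v : V) (x : L) : L :=
  A.bracket (T u) (T v) x

/-- The action `m_T(u,x,v) = [Tu,x,Tv] − T(ρ(Tu,x)v)`. -/
def mT (A : HomLie3 K L) (ρ : L → L → V →ₗ[K] V) (T : V →ₗ[K] L)
    (u : V) (x : L) (v : V) : L :=
  A.bracket (T u) x (T v) - T (ρ (T u) x v)

/-- The action `r_T(x,u,v) = [x,Tu,Tv] − T(ρ(x,Tu)v)`. -/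
def rT (A : HomLie3 K L) (ρ : L → L → V →ₗ[K] V) (T : V →ₗ[K] L)
    (x : L) (u v : V) : L :=
  A.bracket x (T u) (T v) - T (ρ x (T u) v)

lemma HomLie3.bsub₁ (A : HomLie3 K L) (x y z w : L) :
    A.bracket (x - y) z w = A.bracket x z w - A.bracket y z w := by
  rw [eq_sub_iff_add_eq, ← A.add₁, sub_add_cancel]

lemma HomLie3.bsub₂ (A : HomLie3 K L) (x y y' z : L) :
    A.bracket x (y - y') z = A.bracket x y z - A.bracket x y' z := by
  rw [A.skew₁₂ x (y - y'), A.bsub₁, A.skew₁₂ x y z, A.skew₁₂ x y' z]; abel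

lemma HomLie3.bsub₃ (A : HomLie3 K L) (x y z z' : L) :
    A.bracket x y (z - z') = A.bracket x y z - A.bracket x y z' := by
  rw [eq_sub_iff_add_eq, ← A.add₃, sub_add_cancel]

/-- `(L; l_T, m_T, r_T, α)` is a representation of the 3-Hom-Leibniz algebra
`(V, [·,·,·]_T, β)`, where `[u,v,w]_T = ρ(Tu,Tv)w`. -/
theorem lT_mT_rT_rep_of_induced_homLeibniz (A : HomLie3 K L)
    (ρ : L → L → V →ₗ[K] V) (β : V →ₗ[K] V) (hrep : IsRep A ρ β)
    (T : V →ₗ[K] L) (hT : IsEmbeddingTensor A ρ β T) :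
    (∀ (u v : V) (x : L),
      lT A T (β u) (β v) (A.α x) = A.α (lT A T u v x)) ∧
    (∀ (u : V) (x : L) (v : V),
      mT A ρ T (β u) (A.α x) (β v) = A.α (mT A ρ T u x v)) ∧
    (∀ (x : L) (u v : V),
      rT A ρ T (A.α x) (β u) (β v) = A.α (rT A ρ T x u v)) ∧
    -- identity (1)
    (∀ (a b x y : V) (w : L),
      lT A T (ρ (T a) (T b) x) (β y) (A.α w) + lT A T (β x) (ρ (T a) (T b) y) (A.α w)
        + lT A T (β x) (β y) (lT A T a b w)
      = lT A T (β a) (β b) (lT A T x y w)) ∧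
    -- identity (2)
    (∀ (a b x z : V) (w : L),
      mT A ρ T (ρ (T a) (T b) x) (A.α w) (β z) + mT A ρ T (β x) (lT A T a b w) (β z)
        + mT A ρ T (β x) (A.α w) (ρ (T a) (T b) z)
      = lT A T (β a) (β b) (mT A ρ T x w z)) ∧
    -- identity (3)
    (∀ (a b y z : V) (w : L),
      rT A ρ T (lT A T a b w) (β y) (β z) + rT A ρ T (A.α w) (ρ (T a) (T b) y) (β z)
        + rT A ρ T (A.α w) (β y) (ρ (T a) (T b) z)
      = lT A T (β a) (β b) (rT A ρ T w y z)) ∧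
    -- identity (4)
    (∀ (a x y z : V) (w : L),
      rT A ρ T (mT A ρ T a w x) (β y) (β z) + mT A ρ T (β x) (mT A ρ T a w y) (β z)
        + lT A T (β x) (β y) (mT A ρ T a w z)
      = mT A ρ T (β a) (A.α w) (ρ (T x) (T y) z)) ∧
    -- identity (5)
    (∀ (b x y z : V) (w : L),
      rT A ρ T (rT A ρ T w b x) (β y) (β z) + mT A ρ T (β x) (rT A ρ T w b y) (β z)
        + lT A T (β x) (β y) (rT A ρ T w b z)
      = rT A ρ T (A.α w) (β b) (ρ (T x) (T y) z)) := by
  obtain ⟨hadd1, hsmul1, hskew, hβ, hax5, hax6⟩ := hrep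
  obtain ⟨hTβ, hTb⟩ := hT
  have hβp : ∀ x y v, ρ (A.α x) (A.α y) (β v) = β (ρ x y v) := by
    intro x y v
    simpa using LinearMap.congr_fun (hβ x y) v
  have hρ₁ : ∀ x y z v, ρ (x - y) z v = ρ x z v - ρ y z v := by
    intro x y z v
    have h := hadd1 (x - y) y z
    rw [sub_add_cancel] at h
    have h2 : ρ (x - y) z = ρ x z - ρ y z := eq_sub_of_add_eq h.symm
    rw [h2]; simp
  have hρ₂ : ∀ x y y' v, ρ x (y - y') v = ρ x y v - ρ x y' v := by
    intro x y y' v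
    rw [hskew x (y - y')]
    rw [show ρ (y - y') x = ρ y x - ρ y' x from
      eq_sub_of_add_eq (by rw [← hadd1, sub_add_cancel])]
    rw [hskew x y, hskew x y']
    simp; abel
  have haux : ∀ p q r s z', ρ (A.bracket p q r) (A.α s) (β z')
      + ρ (A.α r) (A.bracket p q s) (β z') + ρ (A.α r) (A.α s) (ρ p q z')
      = ρ (A.α p) (A.α q) (ρ r s z') := by
    intro p q r s z'
    have h := LinearMap.congr_fun (hax5 p q r s) z'
    simp only [LinearMap.sub_apply, LinearMap.comp_apply] at h
    have hs := LinearMap.congr_fun (hskew (A.α r) (A.bracket p q s)) (β z')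
    simp only [LinearMap.neg_apply] at hs
    rw [hs]
    have h2 : ρ (A.bracket p q r) (A.α s) (β z') - ρ (A.bracket p q s) (A.α r) (β z')
        + ρ (A.α r) (A.α s) (ρ p q z') = ρ (A.α p) (A.α q) (ρ r s z') := by
      rw [← h]; abel
    rw [← h2]; abel
  refine ⟨?_, ?_, ?_, ?_, ?_, ?_, ?_, ?_⟩
  · intro u v x
    simp only [lT, hTβ, A.mult]
  · intro u x v
    simp only [mT, map_sub, A.mult, hTβ, hβp]
  · intro x u v
    simp only [rT, map_sub, A.mult, hTβ, hβp]
  · -- identity (1)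
    intro a b x y w
    have hjac := A.jacobi (T a) (T b) (T x) (T y) w
    simp only [hTb] at hjac
    simp only [lT, hTβ]
    rw [hjac]
  · -- identity (2)
    intro a b x z w
    have hjac := A.jacobi (T a) (T b) (T x) w (T z)
    simp only [hTb] at hjac
    have hx := congrArg T (haux (T a) (T b) (T x) w z)
    simp only [map_add, hTb] at hx
    simp only [lT, mT, rT, A.bsub₁, A.bsub₂, A.bsub₃, hρ₁, hρ₂, map_sub]
    simp only [hTb]
    simp only [hTβ]
    rw [hjac, ← hx]
    abel
  · -- identity (3)
    intro a b y z w
    have hjac := A.jacobi (T a) (T b) w (T y) (T z)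
    simp only [hTb] at hjac
    have hx := congrArg T (haux (T a) (T b) w (T y) z)
    simp only [map_add, hTb] at hx
    simp only [lT, mT, rT, A.bsub₁, A.bsub₂, A.bsub₃, hρ₁, hρ₂, map_sub]
    simp only [hTb]
    simp only [hTβ]
    rw [hjac, ← hx]
    abel
  · -- identity (4)
    intro a x y z w
    have hjac := A.jacobi (T a) w (T x) (T y) (T z)
    simp only [hTb] at hjac
    have hx := congrArg T (haux (T a) w (T x) (T y) z)
    simp only [map_add, hTb] at hx
    simp only [lT, mT, rT, A.bsub₁, A.bsub₂, A.bsub₃, hρ₁, hρ₂, map_sub]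
    simp only [hTb]
    simp only [hTβ]
    rw [hjac, ← hx]
    abel
  · -- identity (5)
    intro b x y z w
    have hjac := A.jacobi w (T b) (T x) (T y) (T z)
    simp only [hTb] at hjac
    have hx := congrArg T (haux w (T b) (T x) (T y) z)
    simp only [map_add, hTb] at hx
    simp only [lT, mT, rT, A.bsub₁, A.bsub₂, A.bsub₃, hρ₁, hρ₂, map_sub]
    simp only [hTb]
    simp only [hTβ]
    rw [hjac, ← hx]
    abel
end

section
/- Let T: V → L be an embedding tensor on a regular 3-Hom-Lie algebra (L,[·,·,·],α) with respect to a regular representation (V;ρ,β) (α and β invertible). For a,b ∈ L with α(a)=a, α(b)=b, define ℘(a,b): V → L by ℘(a,b)v = T(ρ(a,b)β⁻¹(v)) − [a,b,Tβ⁻¹(v)]. Then δ_T(℘(a,b)) = 0, where δ_T is the 3-Hom-Leibniz coboundary of (V,[·,·,·]_T,β) with coefficients in (L; l_T, m_T, r_T, α); explicitly, for all u,v,w ∈ V: −℘(a,b)(ρ(Tu,Tv)w) + [Tu,Tv,℘(a,b)w] + [Tu,℘(a,b)v,Tw] − T(ρ(Tu,℘(a,b)v)w) + [℘(a,b)u,Tv,Tw]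 − T(ρ(℘(a,b)u,Tv)w) = 0. -/
variable {K L V : Type*} [Field K] [AddCommGroup L] [Module K L]
  [AddCommGroup V] [Module K V]

/-- The 1-coboundary `℘(a,b)(v) = T(ρ(a,b)β⁻¹(v)) − [a, b, Tβ⁻¹(v)]`. -/
def wp (A : HomLie3 K L) (ρ : L → L → V →ₗ[K] V) (T : V →ₗ[K] L)
    (βinv : V →ₗ[K] V) (a b : L) (v : V) : L :=
  T (ρ a b (βinv v)) - A.bracket a b (T (βinv v))

/-- For `α`-fixed elements `a, b` of a regular 3-Hom-Lie algebra, `δ_T(℘(a,b)) = 0`: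
the composition `C⁰ → C¹ → C²` is zero. -/
theorem deltaT_wp_eq_zero (A : HomLie3 K L)
    (ρ : L → L → V →ₗ[K] V) (β : V →ₗ[K] V) (hrep : IsRep A ρ β)
    (T : V →ₗ[K] L) (hT : IsEmbeddingTensor A ρ β T)
    (αinv : L →ₗ[K] L) (βinv : V →ₗ[K] V)
    (hα1 : ∀ x, αinv (A.α x) = x) (hα2 : ∀ x, A.α (αinv x) = x)
    (hβ1 : ∀ v, βinv (β v) = v) (hβ2 : ∀ v, β (βinv v) = v)
    (a b : L) (ha : A.α a = a) (hb : A.α b = b) :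
    ∀ u v w : V,
      -(wp A ρ T βinv a b (ρ (T u) (T v) w))
        + A.bracket (T u) (T v) (wp A ρ T βinv a b w)
        + A.bracket (T u) (wp A ρ T βinv a b v) (T w)
        - T (ρ (T u) (wp A ρ T βinv a b v) w)
        + A.bracket (wp A ρ T βinv a b u) (T v) (T w)
        - T (ρ (wp A ρ T βinv a b u) (T v) w) = 0 := by
  
  obtain ⟨r1, r2, r3, r4, r5, r6⟩ := hrep
  obtain ⟨t1, t2⟩ := hT
  have hflipE : ∀ (p q : L) (m : V), ρ p q m = -ρ q p m := fun p q m => by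
    rw [r3 p q]; rfl
  have h4e : ∀ (p q : L) (m : V), ρ (A.α p) (A.α q) (β m) = β (ρ p q m) := fun p q m => by
    simpa using LinearMap.congr_fun (r4 p q) m
  have h5e : ∀ (p q c d : L) (m : V),
      ρ (A.α p) (A.α q) (ρ c d m) - ρ (A.α c) (A.α d) (ρ p q m)
        = ρ (A.bracket p q c) (A.α d) (β m) - ρ (A.bracket p q d) (A.α c) (β m) :=
    fun p q c d m => by
      simpa using LinearMap.congr_fun (r5 p q c d) m
  have h6e : ∀ (p q c d : L) (m : V),
      ρ (A.bracket p q c) (A.α d) (β m) - ρ (A.α q) (A.α c) (ρ p d m)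
        = ρ (A.α c) (A.α p) (ρ q d m) + ρ (A.α p) (A.α q) (ρ c d m) :=
    fun p q c d m => by
      simpa using LinearMap.congr_fun (r6 p q c d) m
  have hρneg1 : ∀ (p q : L), ρ (-p) q = -ρ p q := fun p q => by
    rw [← neg_one_smul K p, r2, neg_one_smul]
  have hρsub1 : ∀ (p p' q : L) (m : V), ρ (p - p') q m = ρ p q m - ρ p' q m :=
    fun p p' q m => by
      have hm : ρ (p - p') q = ρ p q - ρ p' q := by
        simp only [sub_eq_add_neg]; rw [r1, hρneg1]
      rw [hm]; rfl
  have hρsub2 : ∀ (p q q' : L) (m : V), ρ p (q - q') m = ρ p q m - ρ p q' m :=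
    fun p q q' m => by
      rw [hflipE p (q - q') m, hρsub1 q q' p m, hflipE q p m, hflipE q' p m]; abel
  have hbneg3 : ∀ (p q r : L), A.bracket p q (-r) = -A.bracket p q r := fun p q r => by
    rw [← neg_one_smul K r, A.smul₃, neg_one_smul]
  have hbsub3 : ∀ (p q r r' : L),
      A.bracket p q (r - r') = A.bracket p q r - A.bracket p q r' := fun p q r r' => by
    simp only [sub_eq_add_neg]; rw [A.add₃, hbneg3]
  have hbsub2 : ∀ (p q q' r : L),
      A.bracket p (q - q') r = A.bracket p q r - A.bracket p q' r := fun p q q' r => by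
    rw [A.skew₂₃ p (q - q') r, hbsub3, A.skew₂₃ p q r, A.skew₂₃ p q' r]; abel
  have hbsub1 : ∀ (p p' q r : L),
      A.bracket (p - p') q r = A.bracket p q r - A.bracket p' q r := fun p p' q r => by
    rw [A.skew₁₂ (p - p') q r, hbsub2, A.skew₁₂ p q r, A.skew₁₂ p' q r]; abel
  have hTβinv : ∀ (m : V), T (βinv m) = αinv (T m) := fun m => by
    have h := t1 (βinv m); rw [hβ2] at h
    have h2 := congrArg αinv h; rw [hα1] at h2; exact h2.symm
  have habβinv : ∀ (m : V), ρ a b (βinv m) = βinv (ρ a b m) := fun m => by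
    have h := h4e a b (βinv m); rw [ha, hb, hβ2] at h
    have h2 := congrArg βinv h; rw [hβ1] at h2; exact h2.symm
  have hbrαinv : ∀ (z : L), A.bracket a b (αinv z) = αinv (A.bracket a b z) := fun z => by
    have h := A.mult a b (αinv z); rw [ha, hb, hα2] at h
    have h2 := congrArg αinv h; rw [hα1] at h2; exact h2
  have hwp : ∀ (m : V),
      wp A ρ T βinv a b m = αinv (T (ρ a b m) - A.bracket a b (T m)) := fun m => by
    simp only [wp]
    rw [habβinv, hTβinv, hTβinv, hbrαinv, map_sub]
  have hinj : ∀ (p : L), A.α p = 0 → p = 0 := fun p hp => by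
    have h := congrArg αinv hp; rwa [hα1, map_zero] at h
  have hcyc : ∀ (p q s : L), A.bracket p q s = A.bracket q s p := fun p q s => by
    rw [A.skew₁₂ p q s, A.skew₂₃ q p s, neg_neg]
  intro u v w
  -- instances of the representation identities
  have h5' := h5e (T u) (T v) a b w
  rw [ha, hb] at h5'
  simp only [← t1] at h5'
  have h6a := h6e a (T u) (T v) b w
  rw [ha, hb, hcyc a (T u) (T v)] at h6a
  simp only [← t1] at h6a
  have h6b := h6e b (T u) (T v) a w
  rw [ha, hb, hcyc b (T u) (T v)] at h6b
  simp only [← t1] at h6b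
  have h6c := h6e a b (T v) (T u) w
  rw [ha, hb] at h6c
  simp only [← t1] at h6c
  have h6d := h6e a b (T u) (T v) w
  rw [ha, hb] at h6d
  simp only [← t1] at h6d
  -- flips as zero-sums
  have zf1 : ρ (T (β u)) (A.bracket a b (T v)) (β w)
      + ρ (A.bracket a b (T v)) (T (β u)) (β w) = 0 := by
    rw [hflipE (T (β u)) (A.bracket a b (T v)) (β w)]; abel
  have zf2 : ρ (T (β u)) (T (β v)) (ρ b a w)
      + ρ (T (β u)) (T (β v)) (ρ a b w) = 0 := by
    rw [hflipE b a w, map_neg]; abel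
  have zf3 : ρ a b (ρ (T v) (T u) w) + ρ a b (ρ (T u) (T v) w) = 0 := by
    rw [hflipE (T v) (T u) w, map_neg]; abel
  have zf4 : ρ (T (β v)) a (ρ b (T u) w) + ρ (T (β v)) a (ρ (T u) b w) = 0 := by
    rw [hflipE b (T u) w, map_neg]; abel
  have zf5 : ρ b (T (β v)) (ρ a (T u) w) - ρ (T (β v)) b (ρ (T u) a w) = 0 := by
    rw [hflipE b (T (β v)) (ρ a (T u) w), hflipE a (T u) w, map_neg]; abel
  have zf6 : ρ (T (β u)) a (ρ b (T v) w) - ρ a (T (β u)) (ρ (T v) b w) = 0 := by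
    rw [hflipE (T (β u)) a (ρ b (T v) w), hflipE b (T v) w, map_neg]; abel
  have zf7 : ρ b (T (β u)) (ρ a (T v) w) + ρ b (T (β u)) (ρ (T v) a w) = 0 := by
    rw [hflipE a (T v) w, map_neg]; abel
  have hz5 := sub_eq_zero.mpr h5'
  have hz6a := sub_eq_zero.mpr h6a
  have hz6b := sub_eq_zero.mpr h6b
  have hz6c := sub_eq_zero.mpr h6c
  have hz6d := sub_eq_zero.mpr h6d
  -- the key pointwise identity
  have hI : ρ a b (ρ (T u) (T v) w)
      = ρ (T (β u)) (T (β v)) (ρ a b w)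
        + ρ (T (β u)) (A.bracket a b (T v)) (β w)
        + ρ (A.bracket a b (T u)) (T (β v)) (β w) := by
    rw [← sub_eq_zero]
    have key : ρ a b (ρ (T u) (T v) w)
        - (ρ (T (β u)) (T (β v)) (ρ a b w)
          + ρ (T (β u)) (A.bracket a b (T v)) (β w)
          + ρ (A.bracket a b (T u)) (T (β v)) (β w))
      = (ρ (T (β u)) (T (β v)) (ρ a b w) - ρ a b (ρ (T u) (T v) w)
          - (ρ (A.bracket (T u) (T v) a) b (β w) - ρ (A.bracket (T u) (T v) b) a (β w)))
        + (ρ (A.bracket (T u) (T v) a) b (β w) - ρ (T (β u)) (T (β v)) (ρ a b w)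
          - (ρ (T (β v)) a (ρ (T u) b w) + ρ a (T (β u)) (ρ (T v) b w)))
        - (ρ (A.bracket (T u) (T v) b) a (β w) - ρ (T (β u)) (T (β v)) (ρ b a w)
          - (ρ (T (β v)) b (ρ (T u) a w) + ρ b (T (β u)) (ρ (T v) a w)))
        + (ρ (A.bracket a b (T v)) (T (β u)) (β w) - ρ b (T (β v)) (ρ a (T u) w)
          - (ρ (T (β v)) a (ρ b (T u) w) + ρ a b (ρ (T v) (T u) w)))
        - (ρ (A.bracket a b (T u)) (T (β v)) (β w) - ρ b (T (β u)) (ρ a (T v) w)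
          - (ρ (T (β u)) a (ρ b (T v) w) + ρ a b (ρ (T u) (T v) w)))
        - (ρ (T (β u)) (A.bracket a b (T v)) (β w)
          + ρ (A.bracket a b (T v)) (T (β u)) (β w))
        - (ρ (T (β u)) (T (β v)) (ρ b a w) + ρ (T (β u)) (T (β v)) (ρ a b w))
        + (ρ a b (ρ (T v) (T u) w) + ρ a b (ρ (T u) (T v) w))
        + (ρ (T (β v)) a (ρ b (T u) w) + ρ (T (β v)) a (ρ (T u) b w))
        + (ρ b (T (β v)) (ρ a (T u) w) - ρ (T (β v)) b (ρ (T u) a w))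
        - (ρ (T (β u)) a (ρ b (T v) w) - ρ a (T (β u)) (ρ (T v) b w))
        - (ρ b (T (β u)) (ρ a (T v) w) + ρ b (T (β u)) (ρ (T v) a w)) := by abel
    rw [key, hz5, hz6a, hz6b, hz6c, hz6d, zf1, zf2, zf3, zf4, zf5, zf6, zf7]
    abel
  have hIT : T (ρ a b (ρ (T u) (T v) w))
      = T (ρ (T (β u)) (T (β v)) (ρ a b w))
        + T (ρ (T (β u)) (A.bracket a b (T v)) (β w))
        + T (ρ (A.bracket a b (T u)) (T (β v)) (β w)) := by
    rw [hI]; simp only [map_add]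
  have hJ : A.bracket a b (T (ρ (T u) (T v) w))
      = A.bracket (A.bracket a b (T u)) (T (β v)) (T (β w))
        + A.bracket (T (β u)) (A.bracket a b (T v)) (T (β w))
        + A.bracket (T (β u)) (T (β v)) (A.bracket a b (T w)) := by
    have h := A.jacobi a b (T u) (T v) (T w)
    rw [ha, hb] at h
    simp only [← t1] at h
    rw [t2] at h
    exact h
  simp only [hwp]
  apply hinj
  simp only [map_neg, map_sub, map_add, A.mult, hα2, ← t1, ← h4e]
  simp only [hρsub1, hρsub2, hbsub1, hbsub2, hbsub3, map_sub, t2]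
  rw [hIT, hJ]
  abel
end

section
/- Let T be an embedding tensor on a 3-Hom-Lie algebra (L,[·,·,·],α) with respect to (V;ρ,β), and let 𝔗: V → L be a linear map. Then T_t = T + t𝔗 is an embedding tensor for all scalars t if and only if the following four conditions hold for all u,v,w ∈ V: (1) 𝔗∘β = α∘𝔗; (2) [Tu,Tv,𝔗w] + [Tu,𝔗v,Tw] + [𝔗u,Tv,Tw] = 𝔗(ρ(Tu,Tv)w) + T(ρ(Tu,𝔗v)w) + T(ρ(𝔗u,Tv)w); (3) [Tu,𝔗v,𝔗w] + [𝔗u,Tv,𝔗w] + [𝔗u,𝔗v,Tw] = 𝔗(ρ(Tu,𝔗v)w) + 𝔗(ρ(𝔗u,Tv)w) + T(ρ(𝔗u,𝔗v)w); (4) [𝔗u,𝔗v,𝔗w] = 𝔗(ρ(𝔗u,𝔗v)w). -/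
variable {K L V : Type*} [Field K] [AddCommGroup L] [Module K L]
  [AddCommGroup V] [Module K V]

set_option linter.unusedSectionVars false

private lemma br_add₂' (A : HomLie3 K L) (x y y' z : L) :
    A.bracket x (y + y') z = A.bracket x y z + A.bracket x y' z := by
  rw [A.skew₁₂ x (y + y') z, A.add₁, A.skew₁₂ y x z, A.skew₁₂ y' x z]; abel

private lemma br_smul₂' (A : HomLie3 K L) (c : K) (x y z : L) :
    A.bracket x (c • y) z = c • A.bracket x y z := by
  rw [A.skew₁₂ x (c • y) z, A.smul₁, A.skew₁₂ y x z, smul_neg, neg_neg]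

private lemma rho_add₂' (ρ : L → L → V →ₗ[K] V)
    (hadd : ∀ x x' y, ρ (x + x') y = ρ x y + ρ x' y)
    (hskew : ∀ x y, ρ x y = - ρ y x) (x y y' : L) :
    ρ x (y + y') = ρ x y + ρ x y' := by
  rw [hskew x (y + y'), hadd, hskew y x, hskew y' x]; abel

private lemma rho_smul₂' (ρ : L → L → V →ₗ[K] V)
    (hsmul : ∀ (c : K) x y, ρ (c • x) y = c • ρ x y)
    (hskew : ∀ x y, ρ x y = - ρ y x) (c : K) (x y : L) :
    ρ x (c • y) = c • ρ x y := by
  rw [hskew x (c • y), hsmul, hskew y x, smul_neg, neg_neg]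

private lemma expand_key' (A : HomLie3 K L) (ρ : L → L → V →ₗ[K] V)
    (hadd : ∀ x x' y, ρ (x + x') y = ρ x y + ρ x' y)
    (hsmul : ∀ (c : K) x y, ρ (c • x) y = c • ρ x y)
    (hskew : ∀ x y, ρ x y = - ρ y x)
    (T 𝔗 : V →ₗ[K] L)
    (hT2 : ∀ u v w, A.bracket (T u) (T v) (T w) = T (ρ (T u) (T v) w))
    (t : K) (u v w : V) :
    A.bracket ((T + t • 𝔗) u) ((T + t • 𝔗) v) ((T + t • 𝔗) w)
      - (T + t • 𝔗) (ρ ((T + t • 𝔗) u) ((T + t • 𝔗) v) w)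
    = t • ((A.bracket (T u) (T v) (𝔗 w) + A.bracket (T u) (𝔗 v) (T w)
            + A.bracket (𝔗 u) (T v) (T w))
          - (𝔗 (ρ (T u) (T v) w) + T (ρ (T u) (𝔗 v) w) + T (ρ (𝔗 u) (T v) w)))
      + t ^ 2 • ((A.bracket (T u) (𝔗 v) (𝔗 w) + A.bracket (𝔗 u) (T v) (𝔗 w)
            + A.bracket (𝔗 u) (𝔗 v) (T w))
          - (𝔗 (ρ (T u) (𝔗 v) w) + 𝔗 (ρ (𝔗 u) (T v) w) + T (ρ (𝔗 u) (𝔗 v) w)))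
      + t ^ 3 • (A.bracket (𝔗 u) (𝔗 v) (𝔗 w) - 𝔗 (ρ (𝔗 u) (𝔗 v) w)) := by
  simp only [LinearMap.add_apply, LinearMap.smul_apply, A.add₁, A.smul₁,
    br_add₂', br_smul₂', A.add₃, A.smul₃, hadd, hsmul,
    rho_add₂' ρ hadd hskew, rho_smul₂' ρ hsmul hskew,
    LinearMap.add_apply, LinearMap.smul_apply, map_add, map_smul, hT2]
  module

private lemma cubic_zero' [CharZero K] {M : Type*} [AddCommGroup M] [Module K M] (a b c : M)
    (h : ∀ t : K, t • a + t ^ 2 • b + t ^ 3 • c = 0) : a = 0 ∧ b = 0 ∧ c = 0 := by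
  have h1 := h 1
  have h2 := h (-1)
  have h3 := h 2
  norm_num at h1 h2 h3
  have hb : (2 : K) • b = 0 := by
    have : (2 : K) • b = (a + b + c) + (-a + b + -c) := by module
    rw [this, h1, h2, add_zero]
  have hb0 : b = 0 := by
    rcases smul_eq_zero.mp hb with h | h
    · exact absurd h two_ne_zero
    · exact h
  subst hb0
  have hc : (6 : K) • c = 0 := by
    have : (6 : K) • c = ((2:K) • a + (8:K) • c) + (-2 : K) • (a + c) := by module
    simp only [smul_zero, add_zero] at h1 h3
    rw [this, h3, h1, smul_zero, add_zero]
  have hc0 : c = 0 := by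
    rcases smul_eq_zero.mp hc with h | h
    · exact absurd h (by norm_num)
    · exact h
  subst hc0
  simp only [smul_zero, add_zero] at h1
  exact ⟨h1, rfl, rfl⟩

variable [CharZero K]

/-- `T_t = T + t𝔗` is an embedding tensor for all `t` if and only if the four
deformation equations hold. -/
theorem linear_deformation_iff (A : HomLie3 K L)
    (ρ : L → L → V →ₗ[K] V) (β : V →ₗ[K] V) (hrep : IsRep A ρ β)
    (T 𝔗 : V →ₗ[K] L) (hT : IsEmbeddingTensor A ρ β T) :
    (∀ t : K, IsEmbeddingTensor A ρ β (T + t • 𝔗)) ↔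
      ((∀ v, 𝔗 (β v) = A.α (𝔗 v)) ∧
       (∀ u v w, A.bracket (T u) (T v) (𝔗 w) + A.bracket (T u) (𝔗 v) (T w)
            + A.bracket (𝔗 u) (T v) (T w)
          = 𝔗 (ρ (T u) (T v) w) + T (ρ (T u) (𝔗 v) w) + T (ρ (𝔗 u) (T v) w)) ∧
       (∀ u v w, A.bracket (T u) (𝔗 v) (𝔗 w) + A.bracket (𝔗 u) (T v) (𝔗 w)
            + A.bracket (𝔗 u) (𝔗 v) (T w)
          = 𝔗 (ρ (T u) (𝔗 v) w) + 𝔗 (ρ (𝔗 u) (T v) w) + T (ρ (𝔗 u) (𝔗 v) w)) ∧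
       (∀ u v w, A.bracket (𝔗 u) (𝔗 v) (𝔗 w) = 𝔗 (ρ (𝔗 u) (𝔗 v) w))) := by
  obtain ⟨hadd, hsmul, hskew, _⟩ := hrep
  obtain ⟨hT1, hT2⟩ := hT
  constructor
  · intro h
    refine ⟨?_, ?_, ?_, ?_⟩
    · intro v
      have h1 := (h 1).1 v
      simp only [LinearMap.add_apply, LinearMap.smul_apply, one_smul, map_add, hT1] at h1
      exact add_left_cancel h1
    all_goals {
      intro u v w
      have key : ∀ t : K,
          t • ((A.bracket (T u) (T v) (𝔗 w) + A.bracket (T u) (𝔗 v) (T w)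
                + A.bracket (𝔗 u) (T v) (T w))
              - (𝔗 (ρ (T u) (T v) w) + T (ρ (T u) (𝔗 v) w) + T (ρ (𝔗 u) (T v) w)))
          + t ^ 2 • ((A.bracket (T u) (𝔗 v) (𝔗 w) + A.bracket (𝔗 u) (T v) (𝔗 w)
                + A.bracket (𝔗 u) (𝔗 v) (T w))
              - (𝔗 (ρ (T u) (𝔗 v) w) + 𝔗 (ρ (𝔗 u) (T v) w) + T (ρ (𝔗 u) (𝔗 v) w)))
          + t ^ 3 • (A.bracket (𝔗 u) (𝔗 v) (𝔗 w) - 𝔗 (ρ (𝔗 u) (𝔗 v) w)) = 0 := by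
        intro t
        rw [← expand_key' A ρ hadd hsmul hskew T 𝔗 hT2 t u v w, sub_eq_zero]
        exact (h t).2 u v w
      obtain ⟨k1, k2, k3⟩ := cubic_zero' _ _ _ key
      first
      | exact sub_eq_zero.mp k1
      | exact sub_eq_zero.mp k2
      | exact sub_eq_zero.mp k3
    }
  · rintro ⟨c1, c2, c3, c4⟩ t
    constructor
    · intro v
      simp only [LinearMap.add_apply, LinearMap.smul_apply, map_add, map_smul, hT1, c1 v]
    · intro u v w
      rw [← sub_eq_zero, expand_key' A ρ hadd hsmul hskew T 𝔗 hT2 t u v w,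
        sub_eq_zero_of_eq (c2 u v w), sub_eq_zero_of_eq (c3 u v w),
        sub_eq_zero_of_eq (c4 u v w)]
      simp
end

section
/- Let T_t = T + t𝔗 be a linear deformation of an embedding tensor T on a 3-Hom-Lie algebra (L,[·,·,·],α) with respect to (V;ρ,β). Then 𝔗 is a 1-cocycle for the embedding tensor T: α∘𝔗 = 𝔗∘β, and for all u,v,w ∈ V, (δ_T𝔗)(u,v,w) = −𝔗(ρ(Tu,Tv)w) + [Tu,Tv,𝔗w] + [Tu,𝔗v,Tw] − T(ρ(Tu,𝔗v)w) + [𝔗u,Tv,Tw] − T(ρ(𝔗u,Tv)w) = 0. -/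
variable {K L V : Type*} [Field K] [AddCommGroup L] [Module K L]
  [AddCommGroup V] [Module K V]

variable [CharZero K]

/-- The infinitesimal `𝔗` of a linear deformation `T_t = T + t𝔗` is a 1-cocycle:
`α ∘ 𝔗 = 𝔗 ∘ β` and `δ_T 𝔗 = 0`. -/
theorem infinitesimal_is_one_cocycle (A : HomLie3 K L)
    (ρ : L → L → V →ₗ[K] V) (β : V →ₗ[K] V) (hrep : IsRep A ρ β)
    (T 𝔗 : V →ₗ[K] L) (hT : IsEmbeddingTensor A ρ β T)
    (hdef : ∀ t : K, IsEmbeddingTensor A ρ β (T + t • 𝔗)) :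
    (∀ v, A.α (𝔗 v) = 𝔗 (β v)) ∧
    (∀ u v w : V,
      -(𝔗 (ρ (T u) (T v) w)) + A.bracket (T u) (T v) (𝔗 w)
        + A.bracket (T u) (𝔗 v) (T w) - T (ρ (T u) (𝔗 v) w)
        + A.bracket (𝔗 u) (T v) (T w) - T (ρ (𝔗 u) (T v) w) = 0) := by

  obtain ⟨hT1, hT2⟩ := hT
  obtain ⟨radd, rsmul, rskew, -, -, -⟩ := hrep
  have radd₂ : ∀ x y y', ρ x (y + y') = ρ x y + ρ x y' := by
    intro x y y'
    rw [rskew x (y + y'), radd, rskew y x, rskew y' x]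
    abel
  have rsmul₂ : ∀ (c : K) (x y : L), ρ x (c • y) = c • ρ x y := by
    intro c x y
    rw [rskew x (c • y), rsmul, rskew y x]
    module
  have badd₂ : ∀ x y y' z, A.bracket x (y + y') z
      = A.bracket x y z + A.bracket x y' z := by
    intro x y y' z
    rw [A.skew₁₂ x (y + y'), A.add₁, A.skew₁₂ y x, A.skew₁₂ y' x]
    abel
  have bsmul₂ : ∀ (c : K) (x y z : L), A.bracket x (c • y) z
      = c • A.bracket x y z := by
    intro c x y z
    rw [A.skew₁₂ x (c • y), A.smul₁, A.skew₁₂ y x]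
    module
  constructor
  · intro v
    have h1 := (hdef 1).1 v
    simp only [LinearMap.add_apply, LinearMap.smul_apply, one_smul, map_add] at h1
    have := hT1 v
    linear_combination (norm := module) this - h1
  · intro u v w
    have key : ∀ t : K,
        t • (A.bracket (T u) (T v) (𝔗 w) + A.bracket (T u) (𝔗 v) (T w)
          + A.bracket (𝔗 u) (T v) (T w) - T (ρ (T u) (𝔗 v) w)
          - T (ρ (𝔗 u) (T v) w) - 𝔗 (ρ (T u) (T v) w))
        + (t * t) • (A.bracket (T u) (𝔗 v) (𝔗 w) + A.bracket (𝔗 u) (T v) (𝔗 w)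
          + A.bracket (𝔗 u) (𝔗 v) (T w) - T (ρ (𝔗 u) (𝔗 v) w)
          - 𝔗 (ρ (T u) (𝔗 v) w) - 𝔗 (ρ (𝔗 u) (T v) w))
        + (t * t * t) • (A.bracket (𝔗 u) (𝔗 v) (𝔗 w) - 𝔗 (ρ (𝔗 u) (𝔗 v) w)) = 0 := by
      intro t
      have h := (hdef t).2 u v w
      simp only [LinearMap.add_apply, LinearMap.smul_apply, A.add₁, A.smul₁, badd₂,
        bsmul₂, A.add₃, A.smul₃, radd, rsmul, radd₂, rsmul₂, map_add, map_smul,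
        smul_add, smul_smul] at h
      have hc := hT2 u v w
      linear_combination (norm := module) h - hc
    have e1 := key 1
    have e2 := key (-1)
    have e3 := key 2
    linear_combination (norm := module) e1 - (1/3 : K) • e2 - (1/6 : K) • e3
end

section
/- Let T be an embedding tensor on a regular 3-Hom-Lie algebra (L,[·,·,·],α) with respect to a regular representation (V;ρ,β). If two linear deformations T¹_t = T + t𝔗₁ and T²_t = T + t𝔗₂ are equivalent via elements a,b ∈ L (with α(a)=a, α(b)=b), then 𝔗₂ − 𝔗₁ = ℘(a,b), where ℘(a,b)v = T(ρ(a,b)β⁻¹(v)) − [a,b,Tβ⁻¹(v)]; in particular 𝔗₁ and 𝔗₂ define the same class in the first cohomology group H¹_T(V,L). -/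
variable {K L V : Type*} [Field K] [AddCommGroup L] [Module K L]
  [AddCommGroup V] [Module K V]

variable [CharZero K]

/-- If two linear deformations `T¹_t = T + t𝔗₁` and `T²_t = T + t𝔗₂` of an embedding
tensor `T` on a regular 3-Hom-Lie algebra are equivalent via `α`-fixed elements `a, b`,
then `𝔗₂ − 𝔗₁ = ℘(a,b)` is a 1-coboundary; in particular `𝔗₁` and `𝔗₂` define the same
class in the first cohomology group `H¹_T(V, L)`. -/
theorem equivalent_deformations_same_cohomology_class (A : HomLie3 K L)
    (ρ : L → L → V →ₗ[K] V) (β : V →ₗ[K] V) (hrep : IsRep A ρ β)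
    (T 𝔗₁ 𝔗₂ : V →ₗ[K] L) (hT : IsEmbeddingTensor A ρ β T)
    (hdef₁ : ∀ t : K, IsEmbeddingTensor A ρ β (T + t • 𝔗₁))
    (hdef₂ : ∀ t : K, IsEmbeddingTensor A ρ β (T + t • 𝔗₂))
    (αinv : L →ₗ[K] L) (βinv : V →ₗ[K] V)
    (hα1 : ∀ x, αinv (A.α x) = x) (hα2 : ∀ x, A.α (αinv x) = x)
    (hβ1 : ∀ v, βinv (β v) = v) (hβ2 : ∀ v, β (βinv v) = v)
    (a b : L) (ha : A.α a = a) (hb : A.α b = b)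
    -- `Id_L + t α⁻¹ ∘ ad(a,b)` is a 3-Hom-Lie algebra homomorphism:
    (hhomα : ∀ (t : K) (x : L),
      A.α x + t • αinv (A.bracket a b (A.α x))
        = A.α (x + t • αinv (A.bracket a b x)))
    (hhombr : ∀ (t : K) (x y z : L),
      A.bracket x y z + t • αinv (A.bracket a b (A.bracket x y z))
        = A.bracket (x + t • αinv (A.bracket a b x)) (y + t • αinv (A.bracket a b y))
            (z + t • αinv (A.bracket a b z)))
    -- `Id_V + t β⁻¹ ∘ ρ(a,b)` commutes with `β`:
    (hcommβ : ∀ (t : K) (u : V),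
      β (u + t • βinv (ρ a b u)) = β u + t • βinv (ρ a b (β u)))
    -- condition (2): compatibility with the embedding tensors:
    (h2 : ∀ (t : K) (u : V),
      (T + t • 𝔗₁) (u + t • βinv (ρ a b u))
        = (T u + t • 𝔗₂ u) + t • αinv (A.bracket a b (T u + t • 𝔗₂ u)))
    -- condition (3): compatibility with the representation:
    (h3 : ∀ (t : K) (x y : L) (u : V),
      ρ x y u + t • βinv (ρ a b (ρ x y u))
        = ρ (x + t • αinv (A.bracket a b x)) (y + t • αinv (A.bracket a b y))
            (u + t • βinv (ρ a b u))) :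
    ∀ v : V, 𝔗₂ v - 𝔗₁ v = T (ρ a b (βinv v)) - A.bracket a b (T (βinv v)) := by
  intro v
  set X : V := βinv (ρ a b v) with hX
  -- Extract the coefficient of `t` from condition (2) at `t = 1` and `t = -1`.
  have h2a := h2 1 v
  have h2b := h2 (-1) v
  simp only [one_smul, neg_smul, LinearMap.add_apply, LinearMap.smul_apply,
    map_add, map_neg, ← hX, A.add₃, A.smul₃] at h2a h2b
  have hbneg : ∀ z : L, A.bracket a b (-z) = - A.bracket a b z := by
    intro z
    have h := A.smul₃ (-1 : K) a b z
    simpa [neg_smul] using h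
  simp only [LinearMap.neg_apply, hbneg, map_neg] at h2b
  have key : T X + 𝔗₁ v = 𝔗₂ v + αinv (A.bracket a b (T v)) := by
    apply smul_right_injective L (two_ne_zero : (2 : K) ≠ 0)
    show (2 : K) • (T X + 𝔗₁ v) = (2 : K) • (𝔗₂ v + αinv (A.bracket a b (T v)))
    have e : (T v + 𝔗₁ v + (T X + 𝔗₁ X)) - (T v + -𝔗₁ v + -(T X + -𝔗₁ X))
        = (T v + 𝔗₂ v + (αinv (A.bracket a b (T v)) + αinv (A.bracket a b (𝔗₂ v))))
          - (T v + -𝔗₂ v + -(αinv (A.bracket a b (T v)) + -αinv (A.bracket a b (𝔗₂ v)))) := by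
      rw [h2a, h2b]
    rw [two_smul, two_smul]
    abel_nf at e ⊢
    exact e
  -- `β⁻¹` commutes with `ρ a b` since `α a = a`, `α b = b`.
  have hβρ : X = ρ a b (βinv v) := by
    have h := hrep.2.2.2.1 a b
    rw [ha, hb] at h
    have h' := congrArg (fun f => f (βinv v)) h
    simp only [LinearMap.comp_apply, hβ2] at h'
    rw [hX, h', hβ1]
  -- `α⁻¹ (T v) = T (β⁻¹ v)`.
  have hαT : A.α (T (βinv v)) = T v := by
    rw [← hT.1, hβ2]
  -- `α⁻¹ [a,b,T v] = [a,b,T(β⁻¹ v)]`.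
  have hαbr : αinv (A.bracket a b (T v)) = A.bracket a b (T (βinv v)) := by
    have : A.bracket a b (T v) = A.α (A.bracket a b (T (βinv v))) := by
      rw [A.mult, ha, hb, hαT]
    rw [this, hα1]
  rw [← hβρ, ← hαbr, sub_eq_sub_iff_add_eq_add]
  exact key.symm
end
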